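/- arXiv:1812.08089 — 3 statements merged into one kernel-verified Lean document; each statement's English description precedes it below -/
import Mathlib

section
/- For matrices A and B of the same size, the absolute value of the trace of A times B is bounded by the nuclear norm of A times the operator norm of B: |tr(AB)| ≤ ‖A‖_n · ‖B‖_op. -/
/-!
Let `v_j` be an orthonormal eigenbasis of `Aᵀ A`, so that `‖A v_j‖ = σ_j(A)`. Computing the
trace in this basis gives `tr (A B) = tr (B A) = ∑ j, ⟪v_j, B (A v_j)⟫`, and by Cauchy–Schwarz
each term is at most `‖B (A v_j)‖ ≤ ‖B‖_op σ_j(A)`. The operator-norm bound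
`‖B w‖ ≤ ‖B‖_op ‖w‖` holds because every eigenvalue of `Bᵀ B` is at most `‖B‖_op ²`, i.e.
`‖B‖_op ² • 1 - Bᵀ B` is positive semidefinite.
-/

open Matrix BigOperators

/-- Squared Frobenius norm of a real matrix. -/
noncomputable def frobSq {m n : ℕ} (A : Matrix (Fin m) (Fin n) ℝ) : ℝ :=
  ∑ i, ∑ j, A i j ^ 2

/-- Singular values of a real matrix: square roots of the eigenvalues of `Aᴴ * A`. -/
noncomputable def singVals {m n : ℕ} (A : Matrix (Fin m) (Fin n) ℝ) : Fin n → ℝ :=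
  fun j => Real.sqrt ((Matrix.isHermitian_conjTranspose_mul_self A).eigenvalues j)

/-- Nuclear norm: sum of the singular values. -/
noncomputable def nuclearNorm {m n : ℕ} (A : Matrix (Fin m) (Fin n) ℝ) : ℝ :=
  ∑ j, singVals A j

/-- Operator (spectral) norm: largest singular value. -/
noncomputable def opNorm {m n : ℕ} (A : Matrix (Fin m) (Fin n) ℝ) : ℝ :=
  ⨆ j, singVals A j

namespace Matrix

variable {m n : Type*} [Fintype m] [Fintype n]

theorem abs_dotProduct_le_of_mul_le_sq {x y : n → ℝ} {c : ℝ} (hc : 0 ≤ c)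
    (h : (x ⬝ᵥ x) * (y ⬝ᵥ y) ≤ c ^ 2) : |x ⬝ᵥ y| ≤ c :=
  abs_le_of_sq_le_sq ((Finset.sum_mul_sq_le_sq_mul_sq _ x y).trans
    (by simpa only [dotProduct, sq] using h)) hc

theorem dotProduct_conjTranspose_mul_self_mulVec {R : Type*} [CommSemiring R] [StarRing R]
    [TrivialStar R] (A : Matrix m n R) (w : n → R) :
    w ⬝ᵥ (Aᴴ * A) *ᵥ w = (A *ᵥ w) ⬝ᵥ (A *ᵥ w) := by
  rw [conjTranspose_eq_transpose_of_trivial, ← mulVec_mulVec, mulVec_transpose,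
    dotProduct_comm, ← dotProduct_mulVec]

variable [DecidableEq n]

theorem trace_eq_sum_dotProduct_mulVec (M : Matrix n n ℝ)
    (b : OrthonormalBasis n ℝ (EuclideanSpace ℝ n)) :
    M.trace = ∑ j, ⇑(b j) ⬝ᵥ (M *ᵥ ⇑(b j)) := by
  rw [← M.trace_toLin_eq (EuclideanSpace.basisFun n ℝ).toBasis,
    ← toEuclideanLin_eq_toLin_orthonormal, LinearMap.trace_eq_sum_inner _ b]
  simp [EuclideanSpace.inner_eq_star_dotProduct, dotProduct_comm]

theorem IsHermitian.posSemidef_algebraMap_sub {M : Matrix n n ℝ} (hM : M.IsHermitian)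
    {K : ℝ} (hK : ∀ j, hM.eigenvalues j ≤ K) :
    (algebraMap ℝ (Matrix n n ℝ) K - M).PosSemidef := by
  rw [posSemidef_iff_isHermitian_and_spectrum_nonneg]
  refine ⟨(isHermitian_diagonal _).sub hM, ?_⟩
  rw [← spectrum.singleton_sub_eq, hM.spectrum_real_eq_range_eigenvalues]
  rintro _ ⟨_, rfl, _, ⟨j, rfl⟩, rfl⟩
  simpa using hK j

theorem IsHermitian.dotProduct_mulVec_le {M : Matrix n n ℝ} (hM : M.IsHermitian)
    {K : ℝ} (hK : ∀ j, hM.eigenvalues j ≤ K) (w : n → ℝ) :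
    w ⬝ᵥ (M *ᵥ w) ≤ K * (w ⬝ᵥ w) := by
  have := (hM.posSemidef_algebraMap_sub hK).dotProduct_mulVec_nonneg w
  simp only [star_trivial, sub_mulVec, dotProduct_sub, Algebra.algebraMap_eq_smul_one,
    smul_mulVec, one_mulVec, dotProduct_smul, smul_eq_mul] at this
  linarith

theorem dotProduct_self_eigenvectorBasis {M : Matrix n n ℝ} (hM : M.IsHermitian) (j : n) :
    ⇑(hM.eigenvectorBasis j) ⬝ᵥ ⇑(hM.eigenvectorBasis j) = 1 := by
  simpa [EuclideanSpace.inner_eq_star_dotProduct] using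
    (EuclideanSpace.inner_eq_star_dotProduct _ _).symm.trans (hM.eigenvectorBasis.inner_eq_one j)

theorem IsHermitian.mulVec_dotProduct_mulVec_eigenvectorBasis {A : Matrix m n ℝ}
    (hA : (Aᴴ * A).IsHermitian) (j : n) :
    (A *ᵥ ⇑(hA.eigenvectorBasis j)) ⬝ᵥ (A *ᵥ ⇑(hA.eigenvectorBasis j)) = hA.eigenvalues j := by
  rw [← dotProduct_conjTranspose_mul_self_mulVec, hA.mulVec_eigenvectorBasis, dotProduct_smul,
    dotProduct_self_eigenvectorBasis, smul_eq_mul, mul_one]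

end Matrix

section SingularValues

variable {m n : ℕ}

theorem sq_singVals (A : Matrix (Fin m) (Fin n) ℝ) (j : Fin n) :
    singVals A j ^ 2 = (isHermitian_conjTranspose_mul_self A).eigenvalues j :=
  Real.sq_sqrt (eigenvalues_conjTranspose_mul_self_nonneg A j)

theorem singVals_nonneg (A : Matrix (Fin m) (Fin n) ℝ) (j : Fin n) : 0 ≤ singVals A j :=
  Real.sqrt_nonneg _

theorem singVals_le_opNorm (A : Matrix (Fin m) (Fin n) ℝ) (j : Fin n) :
    singVals A j ≤ opNorm A :=
  le_ciSup (Set.finite_range _).bddAbove j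

theorem opNorm_nonneg (A : Matrix (Fin m) (Fin n) ℝ) : 0 ≤ opNorm A :=
  Real.iSup_nonneg (singVals_nonneg A)

theorem mulVec_dotProduct_mulVec_le_opNorm_sq (A : Matrix (Fin m) (Fin n) ℝ) (w : Fin n → ℝ) :
    (A *ᵥ w) ⬝ᵥ (A *ᵥ w) ≤ opNorm A ^ 2 * (w ⬝ᵥ w) := by
  rw [← dotProduct_conjTranspose_mul_self_mulVec]
  refine (isHermitian_conjTranspose_mul_self A).dotProduct_mulVec_le (fun j ↦ ?_) w
  rw [← sq_singVals]
  exact pow_le_pow_left₀ (singVals_nonneg A j) (singVals_le_opNorm A j) 2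

theorem abs_dotProduct_mul_mulVec_eigenvectorBasis_le {A : Matrix (Fin m) (Fin n) ℝ}
    (hA : (Aᴴ * A).IsHermitian) (B : Matrix (Fin n) (Fin m) ℝ) (j : Fin n) :
    |⇑(hA.eigenvectorBasis j) ⬝ᵥ (B * A) *ᵥ ⇑(hA.eigenvectorBasis j)| ≤
      singVals A j * opNorm B := by
  set v := ⇑(hA.eigenvectorBasis j)
  refine abs_dotProduct_le_of_mul_le_sq (mul_nonneg (singVals_nonneg A j) (opNorm_nonneg B)) ?_
  calc (v ⬝ᵥ v) * ((B * A) *ᵥ v ⬝ᵥ (B * A) *ᵥ v)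
      = (B *ᵥ (A *ᵥ v)) ⬝ᵥ (B *ᵥ (A *ᵥ v)) := by
        rw [dotProduct_self_eigenvectorBasis, one_mul, mulVec_mulVec]
    _ ≤ opNorm B ^ 2 * ((A *ᵥ v) ⬝ᵥ (A *ᵥ v)) := mulVec_dotProduct_mulVec_le_opNorm_sq B _
    _ = (singVals A j * opNorm B) ^ 2 := by
        rw [hA.mulVec_dotProduct_mulVec_eigenvectorBasis, ← sq_singVals]
        ring

end SingularValues

/-- trace duality. For an `m × n` matrix `A` and an `n × m` matrix `B`,
`|tr (A * B)| ≤ ‖A‖ₙ · ‖B‖_op`. -/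
theorem stmt0 {m n : ℕ} (A : Matrix (Fin m) (Fin n) ℝ) (B : Matrix (Fin n) (Fin m) ℝ) :
    |Matrix.trace (A * B)| ≤ nuclearNorm A * opNorm B := by
  rw [trace_mul_comm, trace_eq_sum_dotProduct_mulVec _
    (isHermitian_conjTranspose_mul_self A).eigenvectorBasis, nuclearNorm, Finset.sum_mul]
  exact (Finset.abs_sum_le_sum_abs _ _).trans
    (Finset.sum_le_sum fun j _ ↦ abs_dotProduct_mul_mulVec_eigenvectorBasis_le _ B j)
end

section
/- With M, 𝓟 as above, the nuclear norm is additive on M and 𝓟(Δ): ‖𝓟(Δ) + M‖_n = ‖𝓟(Δ)‖_n + ‖M‖_n for any matrix Δ of the same size as M. -/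
open Matrix BigOperators

/-! The nuclear norm is `tr √(AᴴA)`. When `Aᵀ B = 0` and `A Bᵀ = 0`, the Gram matrix of `A + B`
is `AᵀA + BᵀB`, and these two positive semidefinite summands annihilate each other; hence so do
their square roots, the square root of the sum is the sum of the square roots, and the trace
splits. For `A = 𝓟(Δ)` and `B = M` the two conditions come from `Ucᵀ M = 0` and `M Vc = 0`. -/

open scoped MatrixOrder ComplexOrder

namespace Matrix

variable {n 𝕜 : Type*} [Fintype n] [RCLike 𝕜]

theorem IsHermitian.mul_eq_zero_comm {A B : Matrix n n 𝕜} (hA : A.IsHermitian)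
    (hB : B.IsHermitian) (hAB : A * B = 0) : B * A = 0 := by
  rw [← hA.eq, ← hB.eq, ← conjTranspose_mul, hAB, conjTranspose_zero]

variable [DecidableEq n]

theorem IsHermitian.trace_cfc {A : Matrix n n 𝕜} (hA : A.IsHermitian) (f : ℝ → ℝ) :
    (cfc f A).trace = ∑ i, (f (hA.eigenvalues i) : 𝕜) := by
  rw [hA.cfc_eq, IsHermitian.cfc, Unitary.conjStarAlgAut_apply, trace_mul_cycle,
    Unitary.coe_star_mul_self, one_mul, trace_diagonal]
  rfl

theorem sqrt_mul_eq_zero {A B : Matrix n n 𝕜} (hA : 0 ≤ A) (hB : B.IsHermitian)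
    (hAB : A * B = 0) : CFC.sqrt A * B = 0 := by
  have hS : (CFC.sqrt A).IsHermitian := (CFC.sqrt_nonneg A).posSemidef.isHermitian
  -- `(√A B)ᴴ (√A B) = B A B = 0`
  apply conjTranspose_mul_self_eq_zero.mp
  rw [conjTranspose_mul, hS, hB, Matrix.mul_assoc, ← Matrix.mul_assoc (CFC.sqrt A),
    CFC.sqrt_mul_sqrt_self A hA, hAB, Matrix.mul_zero]

theorem sqrt_mul_sqrt_eq_zero {A B : Matrix n n 𝕜} (hA : 0 ≤ A) (hB : 0 ≤ B)
    (hAB : A * B = 0) : CFC.sqrt A * CFC.sqrt B = 0 := by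
  have hSA : (CFC.sqrt A).IsHermitian := (CFC.sqrt_nonneg A).posSemidef.isHermitian
  have hSB : (CFC.sqrt B).IsHermitian := (CFC.sqrt_nonneg B).posSemidef.isHermitian
  have hB' : B.IsHermitian := hB.posSemidef.isHermitian
  have hBSA : B * CFC.sqrt A = 0 := hSA.mul_eq_zero_comm hB' (sqrt_mul_eq_zero hA hB' hAB)
  exact hSB.mul_eq_zero_comm hSA (sqrt_mul_eq_zero hB hSA hBSA)

theorem sqrt_add_of_mul_eq_zero {A B : Matrix n n 𝕜} (hA : 0 ≤ A) (hB : 0 ≤ B)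
    (hAB : A * B = 0) : CFC.sqrt (A + B) = CFC.sqrt A + CFC.sqrt B := by
  have hBA : B * A = 0 :=
    hA.posSemidef.isHermitian.mul_eq_zero_comm hB.posSemidef.isHermitian hAB
  refine CFC.sqrt_unique ?_ (add_nonneg (CFC.sqrt_nonneg A) (CFC.sqrt_nonneg B))
  rw [add_mul, mul_add, mul_add, sqrt_mul_sqrt_eq_zero hA hB hAB, sqrt_mul_sqrt_eq_zero hB hA hBA,
    CFC.sqrt_mul_sqrt_self A hA, CFC.sqrt_mul_sqrt_self B hB, add_zero, zero_add]

end Matrix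

theorem nuclearNorm_eq_trace_sqrt {m n : ℕ} (A : Matrix (Fin m) (Fin n) ℝ) :
    nuclearNorm A = (CFC.sqrt (Aᴴ * A)).trace := by
  rw [CFC.sqrt_eq_cfc, cfc_nnreal_eq_real _ _ (posSemidef_conjTranspose_mul_self A).nonneg,
    (isHermitian_conjTranspose_mul_self A).trace_cfc]
  simp only [nuclearNorm, singVals, Real.sqrt, RCLike.ofReal_real_eq_id, id]

theorem nuclearNorm_add_of_transpose_mul_eq_zero {m n : ℕ} {A B : Matrix (Fin m) (Fin n) ℝ}
    (hAtB : Aᵀ * B = 0) (hABt : A * Bᵀ = 0) :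
    nuclearNorm (A + B) = nuclearNorm A + nuclearNorm B := by
  have hBtA : Bᵀ * A = 0 := by rw [← transpose_transpose A, ← transpose_mul, hAtB, transpose_zero]
  have hGram : (A + B)ᴴ * (A + B) = Aᴴ * A + Bᴴ * B := by
    simp only [conjTranspose_eq_transpose_of_trivial, transpose_add, Matrix.add_mul,
      Matrix.mul_add, hAtB, hBtA, add_zero, zero_add]
  have hGramOrth : (Aᴴ * A) * (Bᴴ * B) = 0 := by
    simp only [conjTranspose_eq_transpose_of_trivial]
    rw [Matrix.mul_assoc, ← Matrix.mul_assoc A, hABt, Matrix.zero_mul, Matrix.mul_zero]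
  rw [nuclearNorm_eq_trace_sqrt, nuclearNorm_eq_trace_sqrt, nuclearNorm_eq_trace_sqrt, hGram,
    sqrt_add_of_mul_eq_zero (posSemidef_conjTranspose_mul_self A).nonneg
      (posSemidef_conjTranspose_mul_self B).nonneg hGramOrth, trace_add]

theorem stmt4_general {N T k l : ℕ} (M : Matrix (Fin N) (Fin T) ℝ)
    (Uc : Matrix (Fin N) (Fin k) ℝ) (Vc : Matrix (Fin T) (Fin l) ℝ)
    (hUcM : Ucᵀ * M = 0) (hMVc : M * Vc = 0)
    (Δ : Matrix (Fin N) (Fin T) ℝ) :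
    nuclearNorm (Uc * Ucᵀ * Δ * (Vc * Vcᵀ) + M) =
      nuclearNorm (Uc * Ucᵀ * Δ * (Vc * Vcᵀ)) + nuclearNorm M := by
  apply nuclearNorm_add_of_transpose_mul_eq_zero
  · simp only [transpose_mul, transpose_transpose, Matrix.mul_assoc, hUcM, Matrix.mul_zero]
  · simp only [Matrix.mul_assoc, ← transpose_mul, hMVc, transpose_zero, Matrix.mul_zero]

/-- The nuclear norm is additive on `M` and `𝓟(Δ) = Uc Ucᵀ Δ Vc Vcᵀ`,
since `M` and `𝓟(Δ)` have orthogonal column and row spaces. -/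
theorem stmt4 {N T k l : ℕ} (M : Matrix (Fin N) (Fin T) ℝ)
    (Uc : Matrix (Fin N) (Fin k) ℝ) (Vc : Matrix (Fin T) (Fin l) ℝ)
    (hUc : Ucᵀ * Uc = 1) (hVc : Vcᵀ * Vc = 1)
    (hUcM : Ucᵀ * M = 0) (hMVc : M * Vc = 0)
    (Δ : Matrix (Fin N) (Fin T) ℝ) :
    nuclearNorm (Uc * Ucᵀ * Δ * (Vc * Vcᵀ) + M) =
      nuclearNorm (Uc * Ucᵀ * Δ * (Vc * Vcᵀ)) + nuclearNorm M :=
  stmt4_general M Uc Vc hUcM hMVc Δ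
end

section
/- In the iterative singular value thresholding algorithm for joint low-rank estimation, the objective F(Θ, M) = ‖Y − M − X⊙Θ‖_F² + ν₂‖M‖_n + ν₁‖Θ‖_n is monotonically nonincreasing: F(Θ_{k+1}, M_{k+1}) ≤ F(Θ_{k+1}, M_k) ≤ F(Θ_k, M_k) for all k ≥ 0, where Θ_{k+1} = S_{τν₁/2}(Θ_k − τX⊙(X⊙Θ_k − Y + M_k)) and M_{k+1} = S_{ν₂/2}(Y − X⊙Θ_{k+1}), for any step size τ ∈ (0, 1/max_{it}x_{it}²). -/
open Matrix BigOperators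

/-- `B` is the output of the soft singular value thresholding operator `S_lam` applied to `A`,
characterized by its proximal property: `S_lam A` is the minimizer of
`‖A − B‖_F² + 2·lam·‖B‖ₙ` (cf. Statement 9). -/
def IsSVT {N T : ℕ} (lam : ℝ) (A B : Matrix (Fin N) (Fin T) ℝ) : Prop :=
  ∀ C : Matrix (Fin N) (Fin T) ℝ,
    frobSq (A - B) + 2 * lam * nuclearNorm B ≤ frobSq (A - C) + 2 * lam * nuclearNorm C

/-- The nuclear-norm penalized objective `F(Θ, M)`. -/
noncomputable def Fobj {N T : ℕ} (Y X : Matrix (Fin N) (Fin T) ℝ) (ν₁ ν₂ : ℝ)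
    (Θ M : Matrix (Fin N) (Fin T) ℝ) : ℝ :=
  frobSq (Y - M - X ⊙ Θ) + ν₂ * nuclearNorm M + ν₁ * nuclearNorm Θ

/-!
The `M`-update minimizes `F(Θ, ·)` exactly, since up to the factor `2` it is the proximal problem
solved by `S_{ν₂/2}`. For the `Θ`-update, with `A = Θ - τ X⊙(X⊙Θ - Z)` and `τ x²ᵢₜ ≤ 1`, the
quadratic `τ ‖Z - X⊙Θ'‖_F²` is majorized by `τ ‖Z - X⊙Θ‖_F² + ‖A - Θ'‖_F² - ‖A - Θ‖_F²`,
with equality at `Θ' = Θ`; the new iterate minimizes the majorizer plus `τ ν₁ ‖Θ'‖ₙ`, so the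
objective cannot increase.
-/

/-- The gap between the two sides is `(1 - τ x²) (θ' - θ)²`. -/
lemma mul_sq_sub_mul_le_of_mul_sq_le_one {τ x : ℝ} (hx : τ * x ^ 2 ≤ 1) (z θ θ' : ℝ) :
    τ * (z - x * θ') ^ 2 ≤ τ * (z - x * θ) ^ 2 + (θ - τ * (x * (x * θ - z)) - θ') ^ 2
      - (θ - τ * (x * (x * θ - z)) - θ) ^ 2 := by
  nlinarith [mul_le_mul_of_nonneg_right hx (sq_nonneg (θ' - θ))]

lemma mul_frobSq_sub_hadamard_le {m n : ℕ} {τ : ℝ} {X : Matrix (Fin m) (Fin n) ℝ}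
    (hX : ∀ i t, τ * X i t ^ 2 ≤ 1) (Z Θ Θ' : Matrix (Fin m) (Fin n) ℝ) :
    τ * frobSq (Z - X ⊙ Θ') ≤ τ * frobSq (Z - X ⊙ Θ)
      + frobSq (Θ - τ • (X ⊙ (X ⊙ Θ - Z)) - Θ') - frobSq (Θ - τ • (X ⊙ (X ⊙ Θ - Z)) - Θ) := by
  simp only [frobSq, Finset.mul_sum, ← Finset.sum_add_distrib, ← Finset.sum_sub_distrib]
  gcongr with i _ t _
  simpa only [Matrix.sub_apply, Matrix.hadamard_apply, Matrix.smul_apply, smul_eq_mul]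
    using mul_sq_sub_mul_le_of_mul_sq_le_one (hX i t) (Z i t) (Θ i t) (Θ' i t)

section Descent

variable {N T : ℕ} {Y X : Matrix (Fin N) (Fin T) ℝ} {ν₁ ν₂ : ℝ}

lemma Fobj_le_of_isSVT_right {Θ M M' : Matrix (Fin N) (Fin T) ℝ}
    (hM' : IsSVT (ν₂ / 2) (Y - X ⊙ Θ) M') :
    Fobj Y X ν₁ ν₂ Θ M' ≤ Fobj Y X ν₁ ν₂ Θ M := by
  have hmin := hM' M
  rw [mul_div_cancel₀ ν₂ two_ne_zero] at hmin
  simp only [Fobj, sub_right_comm Y _ (X ⊙ Θ)]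
  linarith

lemma Fobj_le_of_isSVT_left {τ : ℝ} (hτ : 0 < τ) (hX : ∀ i t, τ * X i t ^ 2 ≤ 1)
    {Θ Θ' M : Matrix (Fin N) (Fin T) ℝ}
    (hΘ' : IsSVT (τ * ν₁ / 2) (Θ - τ • (X ⊙ (X ⊙ Θ - Y + M))) Θ') :
    Fobj Y X ν₁ ν₂ Θ' M ≤ Fobj Y X ν₁ ν₂ Θ M := by
  have hmin := hΘ' Θ
  rw [mul_div_cancel₀ (τ * ν₁) two_ne_zero, sub_add] at hmin
  have hmaj := mul_frobSq_sub_hadamard_le hX (Y - M) Θ Θ'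
  have hscaled : τ * (frobSq (Y - M - X ⊙ Θ') + ν₁ * nuclearNorm Θ') ≤
      τ * (frobSq (Y - M - X ⊙ Θ) + ν₁ * nuclearNorm Θ) := by
    linarith
  simp only [Fobj]
  linarith [le_of_mul_le_mul_left hscaled hτ]

end Descent

theorem stmt6_general {N T : ℕ} (Y X : Matrix (Fin N) (Fin T) ℝ) (ν₁ ν₂ τ : ℝ)
    (hτ : 0 < τ) (hτX : ∀ i t, τ * X i t ^ 2 < 1)
    (Θ M : ℕ → Matrix (Fin N) (Fin T) ℝ)
    (hΘ : ∀ k, IsSVT (τ * ν₁ / 2) (Θ k - τ • (X ⊙ (X ⊙ Θ k - Y + M k))) (Θ (k + 1)))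
    (hM : ∀ k, IsSVT (ν₂ / 2) (Y - X ⊙ Θ (k + 1)) (M (k + 1))) :
    ∀ k : ℕ,
      Fobj Y X ν₁ ν₂ (Θ (k + 1)) (M (k + 1)) ≤ Fobj Y X ν₁ ν₂ (Θ (k + 1)) (M k) ∧
      Fobj Y X ν₁ ν₂ (Θ (k + 1)) (M k) ≤ Fobj Y X ν₁ ν₂ (Θ k) (M k) :=
  fun k => ⟨Fobj_le_of_isSVT_right (hM k),
    Fobj_le_of_isSVT_left hτ (fun i t => (hτX i t).le) (hΘ k)⟩

/-- monotone descent of the SVT iteration. Under the updates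
`Θ_{k+1} = S_{τν₁/2}(Θ_k − τ X⊙(X⊙Θ_k − Y + M_k))` and `M_{k+1} = S_{ν₂/2}(Y − X⊙Θ_{k+1})`,
with step size `τ ∈ (0, 1/max_{it} x_{it}²)`, the objective is monotonically nonincreasing:
`F(Θ_{k+1}, M_{k+1}) ≤ F(Θ_{k+1}, M_k) ≤ F(Θ_k, M_k)` for all `k ≥ 0`. -/
theorem stmt6 {N T : ℕ} (Y X : Matrix (Fin N) (Fin T) ℝ) (ν₁ ν₂ τ : ℝ)
    (hν₁ : 0 < ν₁) (hν₂ : 0 < ν₂) (hτ : 0 < τ) (hτX : ∀ i t, τ * X i t ^ 2 < 1)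
    (Θ M : ℕ → Matrix (Fin N) (Fin T) ℝ)
    (hΘ : ∀ k, IsSVT (τ * ν₁ / 2) (Θ k - τ • (X ⊙ (X ⊙ Θ k - Y + M k))) (Θ (k + 1)))
    (hM : ∀ k, IsSVT (ν₂ / 2) (Y - X ⊙ Θ (k + 1)) (M (k + 1))) :
    ∀ k : ℕ,
      Fobj Y X ν₁ ν₂ (Θ (k + 1)) (M (k + 1)) ≤ Fobj Y X ν₁ ν₂ (Θ (k + 1)) (M k) ∧
      Fobj Y X ν₁ ν₂ (Θ (k + 1)) (M k) ≤ Fobj Y X ν₁ ν₂ (Θ k) (M k) :=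
  stmt6_general Y X ν₁ ν₂ τ hτ hτX Θ M hΘ hM
end
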